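/- Suppose f ∈ L¹((0,∞) × ℝ). Then for any δ > 0: lim_{t→∞} sup_{|y| ≤ (4−δ)t} | ∫₀ᵗ (H_{2(t−s)} * W_{4(t−s)} * f(s,·))(y) ds − (1/2)∫₀^∞∫_ℝ f(s,y) dy ds | = 0. -/

import Mathlib

/-!
By Fubini, `heatWaveInt f t y = ∫∫_{s > 0} g (t - s) (y - w) f(s, w)` with
`g τ = heatWaveKernel τ = H_{2τ} * W_{4τ}`, which takes values in `[0, 1/2]` and vanishes
for `τ ≤ 0`. For `τ > 0`, `g τ x` is the `N(0, 4τ)`-expectation of `W_{4τ}(x - ·)`, so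
Chebyshev's inequality gives `1/2 - g τ x ≤ 2τ / a²` as soon as `|x| + a ≤ 4τ`.
For fixed `(s, w)` and `|y| ≤ (4 - δ) t` one may take `a = δ t / 2` once `t` is large, hence
`g (t - s) (y - w) → 1/2` along the filter of `(t, y)` with `t → ∞` inside the cone, and
dominated convergence (dominating function `|f|`) along that filter gives the uniform limit.
-/

open MeasureTheory

noncomputable section

/-- The heat kernel `H_t(y) = (4πt)^{-1/2} e^{-y²/(4t)}`. -/
def Hker (t y : ℝ) : ℝ := (Real.sqrt (4 * Real.pi * t))⁻¹ * Real.exp (-y ^ 2 / (4 * t))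

/-- `W_t = (1/2)·1_{[-t,t]}`. -/
def Wfun (t : ℝ) : ℝ → ℝ := Set.indicator (Set.Icc (-t) t) fun _ => (1 : ℝ) / 2

/-- `∫₀ᵗ (H_{2(t−s)} * W_{4(t−s)} * f(s,·))(y) ds`. -/
def heatWaveInt (f : ℝ → ℝ → ℝ) (t y : ℝ) : ℝ :=
  ∫ s in (0:ℝ)..t, ∫ z : ℝ, ∫ w : ℝ,
    Hker (2 * (t - s)) (y - z) * Wfun (4 * (t - s)) (z - w) * f s w

open Real Set Filter Topology ProbabilityTheory

-- Both sides vanish for `t ≤ 0`.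
lemma Hker_eq_gaussianPDFReal (t : ℝ) : Hker t = gaussianPDFReal 0 (2 * t).toNNReal := by
  ext y
  rcases le_or_gt t 0 with ht | ht
  · rw [Real.toNNReal_of_nonpos (by linarith), gaussianPDFReal_zero_var]
    simp [Hker, Real.sqrt_eq_zero_of_nonpos (by nlinarith [pi_pos] : 4 * π * t ≤ 0)]
  · rw [Hker, gaussianPDFReal, Real.coe_toNNReal _ (by positivity)]
    ring_nf

lemma Hker_of_nonpos {t : ℝ} (ht : t ≤ 0) : Hker t = 0 := by
  rw [Hker_eq_gaussianPDFReal, Real.toNNReal_of_nonpos (by linarith), gaussianPDFReal_zero_var]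

lemma Hker_nonneg (t y : ℝ) : 0 ≤ Hker t y := by
  rw [Hker_eq_gaussianPDFReal]
  exact gaussianPDFReal_nonneg _ _ _

lemma integrable_Hker (t : ℝ) : Integrable (Hker t) := by
  rw [Hker_eq_gaussianPDFReal]
  exact integrable_gaussianPDFReal _ _

lemma measurable_Hker_uncurry : Measurable fun p : ℝ × ℝ => Hker p.1 p.2 := by
  unfold Hker; fun_prop

lemma Wfun_apply (r z : ℝ) : Wfun r z = if |z| ≤ r then 1 / 2 else 0 := by
  simp only [Wfun, Set.indicator_apply, Set.mem_Icc, abs_le]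

lemma Wfun_nonneg (r z : ℝ) : 0 ≤ Wfun r z := by
  rw [Wfun_apply]; split_ifs <;> norm_num

lemma Wfun_le_half (r z : ℝ) : Wfun r z ≤ 1 / 2 := by
  rw [Wfun_apply]; split_ifs <;> norm_num

lemma measurable_Wfun_uncurry : Measurable fun p : ℝ × ℝ => Wfun p.1 p.2 := by
  simp only [Wfun_apply]
  exact Measurable.ite (measurableSet_le (by fun_prop) (by fun_prop)) measurable_const
    measurable_const

def heatWaveKernel (τ x : ℝ) : ℝ := ∫ z, Hker (2 * τ) (x - z) * Wfun (4 * τ) z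

lemma heatWaveKernel_of_nonpos {τ : ℝ} (hτ : τ ≤ 0) (x : ℝ) : heatWaveKernel τ x = 0 := by
  simp [heatWaveKernel, Hker_of_nonpos (by linarith : 2 * τ ≤ 0)]

lemma heatWaveKernel_nonneg (τ x : ℝ) : 0 ≤ heatWaveKernel τ x :=
  integral_nonneg fun _ => mul_nonneg (Hker_nonneg _ _) (Wfun_nonneg _ _)

lemma heatWaveKernel_eq_integral_gaussianReal {τ : ℝ} (hτ : 0 < τ) (x : ℝ) :
    heatWaveKernel τ x = ∫ u, Wfun (4 * τ) (x - u) ∂gaussianReal 0 (4 * τ).toNNReal := by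
  rw [integral_gaussianReal_eq_integral_smul (by simpa using hτ), heatWaveKernel,
    ← integral_sub_left_eq_self _ volume x]
  simp only [sub_sub_cancel, smul_eq_mul, Hker_eq_gaussianPDFReal,
    show 2 * (2 * τ) = 4 * τ by ring]

lemma measurable_heatWaveKernel_uncurry :
    Measurable fun p : ℝ × ℝ => heatWaveKernel p.1 p.2 := by
  have : Measurable fun q : (ℝ × ℝ) × ℝ =>
      Hker (2 * q.1.1) (q.1.2 - q.2) * Wfun (4 * q.1.1) q.2 :=
    (measurable_Hker_uncurry.comp (f := fun q : (ℝ × ℝ) × ℝ => (2 * q.1.1, q.1.2 - q.2))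
      (by fun_prop)).mul
      (measurable_Wfun_uncurry.comp (f := fun q : (ℝ × ℝ) × ℝ => (4 * q.1.1, q.2))
        (by fun_prop))
  exact this.stronglyMeasurable.integral_prod_right'.measurable

lemma integrable_Wfun_comp_sub {μ : Measure ℝ} [IsFiniteMeasure μ] (r x : ℝ) :
    Integrable (fun u => Wfun r (x - u)) μ := by
  refine Integrable.of_bound ?_ (1 / 2) (ae_of_all _ fun u => ?_)
  · exact (measurable_Wfun_uncurry.comp (f := fun u => (r, x - u))
      (by fun_prop)).aestronglyMeasurable
  · rw [Real.norm_of_nonneg (Wfun_nonneg _ _)]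
    exact Wfun_le_half _ _

lemma heatWaveKernel_le_half (τ x : ℝ) : heatWaveKernel τ x ≤ 1 / 2 := by
  rcases le_or_gt τ 0 with hτ | hτ
  · rw [heatWaveKernel_of_nonpos hτ]; norm_num
  rw [heatWaveKernel_eq_integral_gaussianReal hτ]
  calc _ ≤ ∫ _, (1 / 2 : ℝ) ∂gaussianReal 0 (4 * τ).toNNReal :=
        integral_mono (integrable_Wfun_comp_sub _ _) (integrable_const _)
          fun u => Wfun_le_half _ _
    _ = 1 / 2 := by simp

lemma integral_sq_gaussianReal (v : NNReal) : ∫ u, u ^ 2 ∂gaussianReal 0 v = v := by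
  have h := variance_eq_integral (X := fun u : ℝ => u) (μ := gaussianReal 0 v) aemeasurable_id
  rw [variance_fun_id_gaussianReal, integral_id_gaussianReal] at h
  simpa using h.symm

lemma half_sub_heatWaveKernel_le {τ a x : ℝ} (hτ : 0 < τ) (ha : 0 < a)
    (hx : |x| + a ≤ 4 * τ) :
    1 / 2 - heatWaveKernel τ x ≤ 2 * τ / a ^ 2 := by
  set γ := gaussianReal 0 (4 * τ).toNNReal
  have hpt : ∀ u, 1 / 2 - Wfun (4 * τ) (x - u) ≤ u ^ 2 / (2 * a ^ 2) := by
    intro u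
    rw [Wfun_apply]
    split_ifs with h
    · norm_num; positivity
    · rw [le_div_iff₀ (by positivity)]
      have : a ≤ |u| := by linarith [abs_sub x u]
      nlinarith [sq_abs u, abs_nonneg u]
  have hsq : Integrable (fun u : ℝ => u ^ 2) γ := (memLp_id_gaussianReal 2).integrable_sq
  calc 1 / 2 - heatWaveKernel τ x = ∫ u, (1 / 2 - Wfun (4 * τ) (x - u)) ∂γ := by
        rw [heatWaveKernel_eq_integral_gaussianReal hτ,
          integral_sub (integrable_const _) (integrable_Wfun_comp_sub _ _)]
        simp [γ]
    _ ≤ ∫ u, u ^ 2 / (2 * a ^ 2) ∂γ :=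
        integral_mono ((integrable_const _).sub (integrable_Wfun_comp_sub _ _))
          (hsq.div_const _) hpt
    _ = 2 * τ / a ^ 2 := by
        rw [integral_div, integral_sq_gaussianReal, Real.coe_toNNReal _ (by positivity)]
        field_simp
        ring

lemma integral_Hker_Wfun_mul_eq_integral_heatWaveKernel_mul (τ y : ℝ) {φ : ℝ → ℝ}
    (hφ : Integrable φ) :
    ∫ z, ∫ w, Hker (2 * τ) (y - z) * Wfun (4 * τ) (z - w) * φ w
      = ∫ w, heatWaveKernel τ (y - w) * φ w := by
  have hmeas : AEStronglyMeasurable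
      (fun p : ℝ × ℝ => Hker (2 * τ) (y - p.1) * Wfun (4 * τ) (p.1 - p.2) * φ p.2)
      (volume.prod volume) :=
    (((measurable_Hker_uncurry.comp (f := fun p : ℝ × ℝ => (2 * τ, y - p.1))
      (by fun_prop)).mul (measurable_Wfun_uncurry.comp
        (f := fun p : ℝ × ℝ => (4 * τ, p.1 - p.2)) (by fun_prop))).aestronglyMeasurable).mul
      hφ.aestronglyMeasurable.comp_snd
  have hint : Integrable
      (fun p : ℝ × ℝ => Hker (2 * τ) (y - p.1) * Wfun (4 * τ) (p.1 - p.2) * φ p.2)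
      (volume.prod volume) := by
    refine Integrable.mono'
      ((((integrable_Hker (2 * τ)).comp_sub_left y).mul_prod hφ.norm).const_mul (1 / 2))
      hmeas (ae_of_all _ fun p => ?_)
    rw [norm_mul, norm_mul, Real.norm_of_nonneg (Hker_nonneg _ _),
      Real.norm_of_nonneg (Wfun_nonneg _ _)]
    have := mul_le_mul_of_nonneg_right (Wfun_le_half (4 * τ) (p.1 - p.2))
      (mul_nonneg (Hker_nonneg (2 * τ) (y - p.1)) (norm_nonneg (φ p.2)))
    linarith
  rw [integral_integral_swap hint]
  refine integral_congr_ae (ae_of_all _ fun w => ?_)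
  dsimp only
  rw [integral_mul_const, heatWaveKernel,
    ← integral_sub_right_eq_self (fun z => Hker (2 * τ) (y - w - z) * Wfun (4 * τ) z) w]
  simp only [sub_sub_sub_cancel_right]

lemma integrable_heatWaveKernel_mul {μ : Measure (ℝ × ℝ)} {f : ℝ → ℝ → ℝ}
    (hf : Integrable (fun p : ℝ × ℝ => f p.1 p.2) μ) (t y : ℝ) :
    Integrable (fun p : ℝ × ℝ => heatWaveKernel (t - p.1) (y - p.2) * f p.1 p.2) μ := by
  refine Integrable.bdd_mul (c := 1 / 2) hf ?_ (ae_of_all _ fun p => ?_)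
  · exact (measurable_heatWaveKernel_uncurry.comp
      (f := fun p : ℝ × ℝ => (t - p.1, y - p.2)) (by fun_prop)).aestronglyMeasurable
  · rw [Real.norm_of_nonneg (heatWaveKernel_nonneg _ _)]
    exact heatWaveKernel_le_half _ _

lemma heatWaveInt_eq_setIntegral {f : ℝ → ℝ → ℝ}
    (hf : IntegrableOn (fun p : ℝ × ℝ => f p.1 p.2) (Ioi 0 ×ˢ univ)) {t : ℝ} (ht : 0 ≤ t)
    (y : ℝ) :
    heatWaveInt f t y
      = ∫ p in Ioi 0 ×ˢ univ, heatWaveKernel (t - p.1) (y - p.2) * f p.1 p.2 := by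
  have hslice : ∀ᵐ s ∂volume.restrict (Ioi (0 : ℝ)), Integrable (f s) := by
    have hf' : Integrable (fun p : ℝ × ℝ => f p.1 p.2)
        ((volume.restrict (Ioi 0)).prod volume) := by
      rwa [Measure.restrict_prod_eq_prod_univ]
    exact hf'.prod_right_ae
  rw [Measure.volume_eq_prod, setIntegral_prod _ (integrable_heatWaveKernel_mul hf t y),
    Measure.restrict_univ, heatWaveInt, intervalIntegral.integral_of_le ht]
  calc _ = ∫ s in Ioc 0 t, ∫ w, heatWaveKernel (t - s) (y - w) * f s w :=
        integral_congr_ae <| (ae_restrict_of_ae_restrict_of_subset Ioc_subset_Ioi_self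
          hslice).mono fun s hs => integral_Hker_Wfun_mul_eq_integral_heatWaveKernel_mul _ _ hs
    _ = _ := by
        refine (setIntegral_eq_of_subset_of_forall_sdiff_eq_zero measurableSet_Ioi
          Ioc_subset_Ioi_self fun s hs => ?_).symm
        have hts : t - s ≤ 0 := by linarith [not_le.1 fun h => hs.2 ⟨hs.1, h⟩]
        simp [heatWaveKernel_of_nonpos hts]

abbrev coneAtTop (δ : ℝ) : Filter (ℝ × ℝ) :=
  comap Prod.fst atTop ⊓ 𝓟 {p | |p.2| ≤ (4 - δ) * p.1}

lemma tendsto_fst_coneAtTop (δ : ℝ) : Tendsto Prod.fst (coneAtTop δ) atTop :=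
  tendsto_comap.mono_left inf_le_left

lemma tendsto_heatWaveKernel_coneAtTop {δ : ℝ} (hδ : 0 < δ) (s w : ℝ) :
    Tendsto (fun p : ℝ × ℝ => heatWaveKernel (p.1 - s) (p.2 - w)) (coneAtTop δ)
      (𝓝 (1 / 2)) := by
  have hfst := tendsto_fst_coneAtTop δ
  have hlower :
      Tendsto (fun p : ℝ × ℝ => 1 / 2 - 16 / δ ^ 2 / p.1) (coneAtTop δ) (𝓝 (1 / 2)) := by
    simpa using tendsto_const_nhds.sub (tendsto_const_nhds.div_atTop hfst)
  refine tendsto_of_tendsto_of_tendsto_of_le_of_le' hlower tendsto_const_nhds ?_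
    (Eventually.of_forall fun p => heatWaveKernel_le_half _ _)
  have hcone : ∀ᶠ p in coneAtTop δ, |p.2| ≤ (4 - δ) * p.1 :=
    mem_inf_of_right (mem_principal_self _)
  filter_upwards [hcone, hfst.eventually (eventually_gt_atTop 0),
    hfst.eventually (eventually_ge_atTop |s|),
    hfst.eventually (eventually_ge_atTop (2 * (4 * s + |w|) / δ))] with p hp ht hts htw
  set t := p.1
  have ha : 0 < δ * t / 2 := by positivity
  have hx : |p.2 - w| + δ * t / 2 ≤ 4 * (t - s) := by
    rw [div_le_iff₀ hδ] at htw
    linarith [abs_sub p.2 w]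
  have hτ : 0 < t - s := by linarith [abs_nonneg (p.2 - w)]
  have := half_sub_heatWaveKernel_le hτ ha hx
  have hkey : 2 * (t - s) / (δ * t / 2) ^ 2 ≤ 16 / δ ^ 2 / t := by
    calc 2 * (t - s) / (δ * t / 2) ^ 2 ≤ 2 * (2 * t) / (δ * t / 2) ^ 2 := by
          gcongr; linarith [neg_abs_le s]
      _ = 16 / δ ^ 2 / t := by field_simp; ring
  linarith

lemma tendsto_heatWaveInt_coneAtTop {f : ℝ → ℝ → ℝ}
    (hf : IntegrableOn (fun p : ℝ × ℝ => f p.1 p.2) (Ioi 0 ×ˢ univ)) {δ : ℝ}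
    (hδ : 0 < δ) :
    Tendsto (fun p : ℝ × ℝ => heatWaveInt f p.1 p.2) (coneAtTop δ)
      (𝓝 (1 / 2 * ∫ s in Ioi 0, ∫ w, f s w)) := by
  have hlim :
      1 / 2 * ∫ s in Ioi 0, ∫ w, f s w = ∫ p in Ioi 0 ×ˢ univ, 1 / 2 * f p.1 p.2 := by
    rw [integral_const_mul, Measure.volume_eq_prod, setIntegral_prod _ hf, Measure.restrict_univ]
  rw [hlim]
  have hmeas : ∀ p : ℝ × ℝ, AEStronglyMeasurable
      (fun q : ℝ × ℝ => heatWaveKernel (p.1 - q.1) (p.2 - q.2) * f q.1 q.2)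
      (volume.restrict (Ioi 0 ×ˢ univ)) := fun p =>
    (integrable_heatWaveKernel_mul hf p.1 p.2).aestronglyMeasurable
  refine (tendsto_integral_filter_of_dominated_convergence (fun q : ℝ × ℝ => ‖f q.1 q.2‖)
    (Eventually.of_forall hmeas) (Eventually.of_forall fun p => ae_of_all _ fun q => ?_) hf.norm
    (ae_of_all _ fun q => (tendsto_heatWaveKernel_coneAtTop hδ q.1 q.2).mul_const _)).congr' ?_
  · rw [norm_mul, Real.norm_of_nonneg (heatWaveKernel_nonneg _ _)]
    exact mul_le_of_le_one_left (norm_nonneg _)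
      (by linarith [heatWaveKernel_le_half (p.1 - q.1) (p.2 - q.2)])
  · filter_upwards [(tendsto_fst_coneAtTop δ).eventually (eventually_ge_atTop 0)] with p hp
    exact (heatWaveInt_eq_setIntegral hf hp p.2).symm

/-- Inside the cone `|y| ≤ (4−δ)t`, the iterated heat-wave convolution of an integrable
function converges uniformly to half of its total integral. -/
theorem heatWaveInt_limit_inside (f : ℝ → ℝ → ℝ)
    (hf : IntegrableOn (fun p : ℝ × ℝ => f p.1 p.2) (Set.Ioi 0 ×ˢ Set.univ)) :
    ∀ δ : ℝ, 0 < δ → ∀ ε : ℝ, 0 < ε → ∃ T : ℝ, ∀ t : ℝ, T ≤ t →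
      ∀ y : ℝ, |y| ≤ (4 - δ) * t →
        |heatWaveInt f t y - 1 / 2 * ∫ s in Set.Ioi (0:ℝ), ∫ w : ℝ, f s w| < ε := by
  intro δ hδ ε hε
  have h := Metric.tendsto_nhds.1 (tendsto_heatWaveInt_coneAtTop hf hδ) ε hε
  rw [coneAtTop, eventually_inf_principal, eventually_comap, eventually_atTop] at h
  obtain ⟨T, hT⟩ := h
  exact ⟨T, fun t ht y hy => hT t ht (t, y) rfl hy⟩

end
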